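/- arXiv:2503.12268 — 6 statements merged into one kernel-verified Lean document; each statement's English description precedes it below -/
import Mathlib

section
/- Let R = ⊕_{n≥0} R_n be an ℕ-graded ring, let S₀ be a generating set of the degree-zero subring R₀, and let S₊ be a set of homogeneous elements of the ideal R₊ = ⊕_{n≥1} R_n. If R₊ = S₊·R (i.e. S₊ generates R₊ as a right ideal of R), then S₀ ∪ S₊ generates R as a ring. -/
/-!
By strong induction on `n`, every element of `R_n` lies in the subring `T` generated by
`S₀ ∪ S₊`. For `n > 0`, an element `x ∈ R_n` is a sum `±∑ sᵢ rᵢ` with `sᵢ ∈ S₊` of degree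
`dᵢ > 0`; taking degree-`n` components gives `x = ±∑ sᵢ (rᵢ)_{n - dᵢ}`, and each
`(rᵢ)_{n - dᵢ}` lies in `T` by the induction hypothesis.
-/

open DirectSum

variable {R : Type*} [Ring R]

/-- The additive subgroup of elements of positive degree in a graded ring. -/
def posPart (𝒜 : ℕ → AddSubgroup R) : AddSubgroup R := ⨆ n > 0, 𝒜 n

/-- The right ideal generated by a set `S`, as an additive subgroup:
the additive closure of the products `s * r` with `s ∈ S`. -/
def rightIdealClosure (S : Set R) : AddSubgroup R :=
  AddSubgroup.closure {x | ∃ s ∈ S, ∃ r : R, x = s * r}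

/-- The left ideal generated by a set `S`, as an additive subgroup. -/
def leftIdealClosure (S : Set R) : AddSubgroup R :=
  AddSubgroup.closure {x | ∃ s ∈ S, ∃ r : R, x = r * s}

theorem mem_posPart_of_mem {𝒜 : ℕ → AddSubgroup R} {n : ℕ} (hn : 0 < n) {x : R}
    (hx : x ∈ 𝒜 n) : x ∈ posPart 𝒜 :=
  AddSubgroup.mem_iSup_of_mem n (AddSubgroup.mem_iSup_of_mem hn hx)

theorem Subring.eq_top_of_homogeneous_mem (𝒜 : ℕ → AddSubgroup R) [GradedRing 𝒜]
    {T : Subring R} (hT : ∀ n, ∀ x ∈ 𝒜 n, x ∈ T) : T = ⊤ :=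
  eq_top_iff.mpr fun x _ =>
    Decomposition.inductionOn 𝒜 T.zero_mem (fun m => hT _ _ m.2)
      (fun _ _ => T.add_mem) x

theorem rightIdealClosure_le_comap_proj (𝒜 : ℕ → AddSubgroup R) [GradedRing 𝒜]
    {Sp : Set R} (hSphom : ∀ s ∈ Sp, ∃ d > 0, s ∈ 𝒜 d) {T : Subring R} (hSpT : Sp ⊆ T)
    (n : ℕ) (hlow : ∀ m < n, ∀ x ∈ 𝒜 m, x ∈ T) :
    rightIdealClosure Sp ≤ T.toAddSubgroup.comap (GradedRing.proj 𝒜 n) := by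
  refine AddSubgroup.closure_le _ |>.mpr ?_
  rintro _ ⟨s, hs, r, rfl⟩
  obtain ⟨d, hd, hsd⟩ := hSphom s hs
  change (decompose 𝒜 (s * r) n : R) ∈ T
  by_cases hdn : d ≤ n
  · rw [coe_decompose_mul_of_left_mem_of_le 𝒜 hsd hdn]
    exact T.mul_mem (hSpT hs) (hlow _ (by omega) _ (decompose 𝒜 r (n - d)).2)
  · rw [coe_decompose_mul_of_left_mem_of_not_le 𝒜 hsd hdn]
    exact T.zero_mem

theorem stmt_0_general (𝒜 : ℕ → AddSubgroup R) [GradedRing 𝒜] (S₀ Sp : Set R)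
    (hS₀gen : (𝒜 0 : Set R) ⊆ (Subring.closure S₀ : Set R))
    (hSphom : ∀ s ∈ Sp, ∃ n > 0, s ∈ 𝒜 n)
    (hgen : rightIdealClosure Sp = posPart 𝒜) :
    Subring.closure (S₀ ∪ Sp) = ⊤ := by
  refine Subring.eq_top_of_homogeneous_mem 𝒜 fun n => ?_
  induction n using Nat.strong_induction_on with
  | _ n ih =>
    intro x hx
    rcases Nat.eq_zero_or_pos n with rfl | hn
    · exact Subring.closure_mono Set.subset_union_left (hS₀gen hx)
    · have hxI : x ∈ rightIdealClosure Sp := hgen ▸ mem_posPart_of_mem hn hx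
      have hproj := rightIdealClosure_le_comap_proj 𝒜 hSphom
        (Subring.subset_closure.trans' Set.subset_union_right) n ih hxI
      rwa [AddSubgroup.mem_comap, GradedRing.proj_apply, decompose_of_mem_same 𝒜 hx] at hproj

/-- If `S₀` generates `R₀` as a ring and `Sp` is a set of homogeneous elements of
positive degree generating `R₊` as a right ideal, then `S₀ ∪ Sp` generates `R` as a ring. -/
theorem stmt_0 (𝒜 : ℕ → AddSubgroup R) [GradedRing 𝒜] (S₀ Sp : Set R)
    (hS₀ : S₀ ⊆ (𝒜 0 : Set R))
    (hS₀gen : (𝒜 0 : Set R) ⊆ (Subring.closure S₀ : Set R))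
    (hSphom : ∀ s ∈ Sp, ∃ n > 0, s ∈ 𝒜 n)
    (hgen : rightIdealClosure Sp = posPart 𝒜) :
    Subring.closure (S₀ ∪ Sp) = ⊤ :=
  stmt_0_general 𝒜 S₀ Sp hS₀gen hSphom hgen
end

section
/- Let R = ⊕_{n≥0} R_n be an ℕ-graded ring, let S₀ be a generating set of R₀, and let S₊ be a set of homogeneous elements of R₊ = ⊕_{n≥1} R_n. If R₊ = R·S₊ (i.e. S₊ generates R₊ as a left ideal of R), then S₀ ∪ S₊ generates R as a ring. -/
open DirectSum

variable {R : Type*} [Ring R]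

/-! By strong induction on `n`, every element `x` of `R_n` lies in the subring `C` generated by
`S₀ ∪ S₊`. For `n = 0` this is the hypothesis on `S₀`. For `n > 0`, write `x = ∑ rᵢ sᵢ` with
`sᵢ ∈ S₊` of degree `dᵢ > 0`; taking degree-`n` components, `x = ∑ (rᵢ)_{n - dᵢ} sᵢ`, and each
`(rᵢ)_{n - dᵢ}` lies in `C` by induction. Since `R` is the sum of its graded pieces, `C = R`. -/

theorem Subring.eq_top_of_forall_gradedPiece_subset {ι σ : Type*} [DecidableEq ι]
    [AddMonoid ι] [SetLike σ R] [AddSubmonoidClass σ R] (𝒜 : ι → σ) [GradedRing 𝒜]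
    {C : Subring R} (h : ∀ i, (𝒜 i : Set R) ⊆ C) : C = ⊤ :=
  eq_top_iff.2 fun x _ =>
    DirectSum.Decomposition.inductionOn 𝒜 (motive := (· ∈ C)) C.zero_mem
      (fun {i} y => h i y.2) (fun _ _ => C.add_mem) x

theorem GradedRing.proj_mem_of_mem_leftIdealClosure (𝒜 : ℕ → AddSubgroup R) [GradedRing 𝒜]
    {C : Subring R} {S : Set R} (hSC : S ⊆ C) (hShom : ∀ s ∈ S, ∃ d > 0, s ∈ 𝒜 d) {n : ℕ}
    (hlow : ∀ m < n, (𝒜 m : Set R) ⊆ C) {y : R} (hy : y ∈ leftIdealClosure S) :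
    GradedRing.proj 𝒜 n y ∈ C := by
  suffices leftIdealClosure S ≤ C.toAddSubgroup.comap (GradedRing.proj 𝒜 n) from this hy
  refine AddSubgroup.closure_le _ |>.2 ?_
  rintro _ ⟨s, hs, r, rfl⟩
  obtain ⟨d, hd, hsd⟩ := hShom s hs
  change GradedRing.proj 𝒜 n (r * s) ∈ C
  rw [GradedRing.proj_apply]
  by_cases hdn : d ≤ n
  · rw [coe_decompose_mul_of_right_mem_of_le 𝒜 hsd hdn]
    exact C.mul_mem (hlow (n - d) (by omega) (decompose 𝒜 r (n - d)).2) (hSC hs)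
  · rw [coe_decompose_mul_of_right_mem_of_not_le 𝒜 hsd hdn]
    exact C.zero_mem

theorem stmt_1_general (𝒜 : ℕ → AddSubgroup R) [GradedRing 𝒜] (S₀ Sp : Set R)
    (hS₀gen : (𝒜 0 : Set R) ⊆ (Subring.closure S₀ : Set R))
    (hSphom : ∀ s ∈ Sp, ∃ n > 0, s ∈ 𝒜 n)
    (hgen : leftIdealClosure Sp = posPart 𝒜) :
    Subring.closure (S₀ ∪ Sp) = ⊤ := by
  refine Subring.eq_top_of_forall_gradedPiece_subset 𝒜 fun n => ?_
  induction n using Nat.strong_induction_on with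
  | _ n ih =>
    intro x hx
    rcases Nat.eq_zero_or_pos n with rfl | hn
    · exact Subring.closure_mono Set.subset_union_left (hS₀gen hx)
    · have hxS : x ∈ leftIdealClosure Sp := hgen ▸ mem_posPart_of_mem hn hx
      have hproj := GradedRing.proj_mem_of_mem_leftIdealClosure 𝒜
        (Subring.subset_closure.trans' Set.subset_union_right) hSphom ih hxS
      rwa [GradedRing.proj_apply, decompose_of_mem_same 𝒜 hx] at hproj

/-- If `S₀` generates `R₀` as a ring and `Sp` is a set of homogeneous elements of
positive degree generating `R₊` as a left ideal, then `S₀ ∪ Sp` generates `R` as a ring. -/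
theorem stmt_1 (𝒜 : ℕ → AddSubgroup R) [GradedRing 𝒜] (S₀ Sp : Set R)
    (hS₀ : S₀ ⊆ (𝒜 0 : Set R))
    (hS₀gen : (𝒜 0 : Set R) ⊆ (Subring.closure S₀ : Set R))
    (hSphom : ∀ s ∈ Sp, ∃ n > 0, s ∈ 𝒜 n)
    (hgen : leftIdealClosure Sp = posPart 𝒜) :
    Subring.closure (S₀ ∪ Sp) = ⊤ :=
  stmt_1_general 𝒜 S₀ Sp hS₀gen hSphom hgen
end

section
/- Let R = ⊕_{n≥0} R_n be an ℕ-graded ring that is right Noetherian. If S₀ is a generating set of the subring R₀, then there exists a finite subset S₊ of homogeneous elements of R₊ such that S₀ ∪ S₊ generates R as a ring. -/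
/-!
Since `R` is right Noetherian, the right ideal `R₊` is generated by finitely many homogeneous
elements `s₁, …, sₖ` of positive degrees `dᵢ`. An element `x` of degree `n > 0` is then
`∑ sᵢ rᵢ`, and taking degree-`n` components gives `x = ∑ sᵢ (rᵢ)_{n - dᵢ}` with the terms
`dᵢ > n` vanishing; by strong induction on the degree every `Rₙ` lies in the subring generated
by `S₀` and the `sᵢ`, and `R₀` does by assumption.
-/

open DirectSum

variable {R : Type*} [Ring R]

theorem mem_rightIdealClosure_of_op_mem_span {S : Set R} {x : R}
    (h : MulOpposite.op x ∈ Submodule.span Rᵐᵒᵖ (MulOpposite.op '' S)) :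
    x ∈ rightIdealClosure S := by
  obtain ⟨k, c, g, hsum⟩ := Submodule.mem_span_set'.1 h
  have hx : x = ∑ i, (g i : Rᵐᵒᵖ).unop * (c i).unop := by
    simpa using (congrArg MulOpposite.unop hsum).symm
  rw [hx]
  refine sum_mem fun i _ => AddSubgroup.subset_closure ?_
  obtain ⟨s, hs, hgs⟩ := (g i).2
  exact ⟨s, hs, (c i).unop, by simp [← hgs]⟩

theorem exists_finset_subset_rightIdealClosure [IsNoetherianRing Rᵐᵒᵖ] (S : Set R) :
    ∃ F : Finset R, ↑F ⊆ S ∧ S ⊆ rightIdealClosure (F : Set R) := by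
  classical
  obtain ⟨F', hF'S, hspan⟩ := (Submodule.fg_span_iff_fg_span_finset_subset
    (MulOpposite.op '' S)).1 (IsNoetherian.noetherian (R := Rᵐᵒᵖ) _)
  have hop : MulOpposite.op '' (F'.image MulOpposite.unop : Set R) = F' := by
    simp [Set.image_image]
  refine ⟨F'.image MulOpposite.unop, ?_, fun s hs => ?_⟩
  · rw [Finset.coe_image]
    rintro _ ⟨a, ha, rfl⟩
    obtain ⟨s, hs, rfl⟩ := hF'S ha
    exact hs
  · refine mem_rightIdealClosure_of_op_mem_span ?_
    rw [hop, ← hspan]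
    exact Submodule.subset_span ⟨s, hs, rfl⟩

section Graded

variable (𝒜 : ℕ → AddSubgroup R) [GradedRing 𝒜] {T : Subring R}

theorem coe_decompose_mul_mem_of_forall_lt {t r : R} {d n : ℕ} (hd : 0 < d) (ht : t ∈ 𝒜 d)
    (htT : t ∈ T) (hlt : ∀ m < n, (𝒜 m : Set R) ⊆ T) :
    (decompose 𝒜 (t * r) n : R) ∈ T := by
  by_cases hdn : d ≤ n
  · rw [coe_decompose_mul_of_left_mem_of_le 𝒜 ht hdn]
    exact T.mul_mem htT (hlt (n - d) (by omega) (SetLike.coe_mem _))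
  · rw [coe_decompose_mul_of_left_mem_of_not_le 𝒜 ht hdn]
    exact T.zero_mem

theorem coe_decompose_mem_of_mem_rightIdealClosure {G : Set R} (hGT : G ⊆ T)
    (hG : ∀ g ∈ G, ∃ d > 0, g ∈ 𝒜 d) {n : ℕ} (hlt : ∀ m < n, (𝒜 m : Set R) ⊆ T) {x : R}
    (hx : x ∈ rightIdealClosure G) : (decompose 𝒜 x n : R) ∈ T := by
  induction hx using AddSubgroup.closure_induction with
  | mem _ hy =>
    obtain ⟨g, hg, r, rfl⟩ := hy
    obtain ⟨d, hd, hgd⟩ := hG g hg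
    exact coe_decompose_mul_mem_of_forall_lt 𝒜 hd hgd (hGT hg) hlt
  | zero => simp
  | add _ _ _ _ hy hz => rw [decompose_add]; exact T.add_mem hy hz
  | neg _ _ hy => rw [decompose_neg]; exact T.neg_mem hy

theorem subring_eq_top_of_posPart_le_rightIdealClosure {G : Set R} (h0 : (𝒜 0 : Set R) ⊆ T)
    (hGT : G ⊆ T) (hG : ∀ g ∈ G, ∃ d > 0, g ∈ 𝒜 d) (hpos : posPart 𝒜 ≤ rightIdealClosure G) :
    T = ⊤ := by
  classical
  have hdeg : ∀ n, (𝒜 n : Set R) ⊆ T := by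
    intro n
    induction n using Nat.strong_induction_on with
    | _ n ih =>
      intro x hx
      rcases Nat.eq_zero_or_pos n with rfl | hn
      · exact h0 hx
      · rw [← decompose_of_mem_same 𝒜 hx]
        exact coe_decompose_mem_of_mem_rightIdealClosure 𝒜 hGT hG ih
          (hpos (le_iSup₂ (f := fun n (_ : n > 0) => 𝒜 n) n hn hx))
  refine eq_top_iff.2 fun x _ => ?_
  rw [← sum_support_decompose 𝒜 x]
  exact sum_mem fun i _ => hdeg i (SetLike.coe_mem _)

end Graded

theorem stmt_2_general (𝒜 : ℕ → AddSubgroup R) [GradedRing 𝒜] [IsNoetherianRing Rᵐᵒᵖ]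
    (S₀ : Set R)
    (hS₀gen : (𝒜 0 : Set R) ⊆ (Subring.closure S₀ : Set R)) :
    ∃ Sp : Finset R, (∀ s ∈ Sp, ∃ n > 0, s ∈ 𝒜 n) ∧
      Subring.closure (S₀ ∪ (Sp : Set R)) = ⊤ := by
  obtain ⟨F, hFhom, hFgen⟩ := exists_finset_subset_rightIdealClosure {x : R | ∃ n > 0, x ∈ 𝒜 n}
  refine ⟨F, hFhom, subring_eq_top_of_posPart_le_rightIdealClosure 𝒜
    (hS₀gen.trans (Subring.closure_mono Set.subset_union_left))
    (Set.subset_union_right.trans Subring.subset_closure) hFhom ?_⟩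
  exact iSup₂_le fun n hn x hx => hFgen ⟨n, hn, hx⟩

/-- If `R` is a right Noetherian graded ring and `S₀` generates `R₀` as a ring, then there
is a finite set of homogeneous elements of positive degree which together with `S₀`
generates `R` as a ring. -/
theorem stmt_2 (𝒜 : ℕ → AddSubgroup R) [GradedRing 𝒜] [IsNoetherianRing Rᵐᵒᵖ]
    (S₀ : Set R)
    (hS₀ : S₀ ⊆ (𝒜 0 : Set R))
    (hS₀gen : (𝒜 0 : Set R) ⊆ (Subring.closure S₀ : Set R)) :
    ∃ Sp : Finset R, (∀ s ∈ Sp, ∃ n > 0, s ∈ 𝒜 n) ∧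
      Subring.closure (S₀ ∪ (Sp : Set R)) = ⊤ :=
  stmt_2_general 𝒜 S₀ hS₀gen
end

section
/- Let R = ⊕_{n≥0} R_n be an ℕ-graded ring that is right (or left) Noetherian. If the degree-zero subring R₀ is an affine ring (finitely generated as a ring), then R is affine. -/
open DirectSum

variable {R : Type*} [Ring R]

/-! Let `R₊` be the set of homogeneous elements of positive degree. Noetherianity makes the one-sided
ideal generated by `R₊` finitely generated, by a finite `T ⊆ R₊`. Projecting a relation
`a = ∑ cᵢ xᵢ` (`xᵢ ∈ T`) to the degree `n` of `a` rewrites `a` through `T` and homogeneous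
coefficients of degree `< n`, so by induction on the degree every homogeneous element lies in the
subring generated by `T` and generators of `R₀`. -/

namespace GradedRing

variable (𝒜 : ℕ → AddSubgroup R)

def posHomogeneous : Set R := {x | ∃ d, 0 < d ∧ x ∈ 𝒜 d}

theorem exists_finset_span_eq {S : Type*} [Semiring S] [Module S R] [IsNoetherian S R] :
    ∃ T : Finset R, (T : Set R) ⊆ posHomogeneous 𝒜 ∧
      Submodule.span S (posHomogeneous 𝒜) = Submodule.span S T :=
  (Submodule.fg_span_iff_fg_span_finset_subset _).1 (IsNoetherian.noetherian _)

variable [GradedRing 𝒜]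

theorem subring_eq_top_of_forall_subset {C : Subring R} (h : ∀ n, (𝒜 n : Set R) ⊆ C) : C = ⊤ :=
  eq_top_iff.2 fun a _ =>
    DirectSum.Decomposition.inductionOn 𝒜 (zero_mem C) (fun m => h _ m.2) (fun _ _ => add_mem) a

variable {𝒜} {C : Subring R} {n : ℕ}

theorem decompose_mul_mem_of_right_mem {x : R} (hx : x ∈ posHomogeneous 𝒜) (hxC : x ∈ C)
    (hC : ∀ m < n, (𝒜 m : Set R) ⊆ C) (c : R) : (DirectSum.decompose 𝒜 (c * x) n : R) ∈ C := by
  obtain ⟨d, hd, hxd⟩ := hx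
  by_cases hdn : d ≤ n
  · rw [DirectSum.coe_decompose_mul_of_right_mem_of_le 𝒜 hxd hdn]
    exact mul_mem (hC (n - d) (by omega) (SetLike.coe_mem _)) hxC
  · rw [DirectSum.coe_decompose_mul_of_right_mem_of_not_le 𝒜 hxd hdn]
    exact zero_mem C

theorem decompose_mul_mem_of_left_mem {x : R} (hx : x ∈ posHomogeneous 𝒜) (hxC : x ∈ C)
    (hC : ∀ m < n, (𝒜 m : Set R) ⊆ C) (c : R) : (DirectSum.decompose 𝒜 (x * c) n : R) ∈ C := by
  obtain ⟨d, hd, hxd⟩ := hx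
  by_cases hdn : d ≤ n
  · rw [DirectSum.coe_decompose_mul_of_left_mem_of_le 𝒜 hxd hdn]
    exact mul_mem hxC (hC (n - d) (by omega) (SetLike.coe_mem _))
  · rw [DirectSum.coe_decompose_mul_of_left_mem_of_not_le 𝒜 hxd hdn]
    exact zero_mem C

theorem mem_of_mem_span_left {T : Set R} (hT : T ⊆ posHomogeneous 𝒜) (hTC : T ⊆ C)
    (hC : ∀ m < n, (𝒜 m : Set R) ⊆ C) {a : R} (ha : a ∈ 𝒜 n) (haT : a ∈ Submodule.span R T) :
    a ∈ C := by
  obtain ⟨c, hc, rfl⟩ := Submodule.mem_span_set.mp haT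
  rw [← DirectSum.decompose_of_mem_same 𝒜 ha, Finsupp.sum, DirectSum.decompose_sum,
    DFinsupp.finsetSum_apply, AddSubgroup.val_finsetSum]
  exact sum_mem fun x hx => decompose_mul_mem_of_right_mem (hT (hc hx)) (hTC (hc hx)) hC (c x)

theorem mem_of_mem_span_right {T : Set R} (hT : T ⊆ posHomogeneous 𝒜) (hTC : T ⊆ C)
    (hC : ∀ m < n, (𝒜 m : Set R) ⊆ C) {a : R} (ha : a ∈ 𝒜 n) (haT : a ∈ Submodule.span Rᵐᵒᵖ T) :
    a ∈ C := by
  obtain ⟨c, hc, rfl⟩ := Submodule.mem_span_set.mp haT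
  rw [← DirectSum.decompose_of_mem_same 𝒜 ha, Finsupp.sum, DirectSum.decompose_sum,
    DFinsupp.finsetSum_apply, AddSubgroup.val_finsetSum]
  exact sum_mem fun x hx => decompose_mul_mem_of_left_mem (hT (hc hx)) (hTC (hc hx)) hC (c x).unop

variable (𝒜)

theorem exists_finset_forall_subset_of_lt (hNoeth : IsNoetherianRing R ∨ IsNoetherianRing Rᵐᵒᵖ) :
    ∃ T : Finset R, ∀ C : Subring R, (T : Set R) ⊆ C → ∀ n, 0 < n →
      (∀ m < n, (𝒜 m : Set R) ⊆ C) → (𝒜 n : Set R) ⊆ C := by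
  rcases hNoeth with hN | hN
  · obtain ⟨T, hT, hspan⟩ := exists_finset_span_eq 𝒜 (S := R)
    refine ⟨T, fun C hTC n hn hC a ha => mem_of_mem_span_left hT hTC hC ha ?_⟩
    exact hspan ▸ Submodule.subset_span ⟨n, hn, ha⟩
  · have : IsNoetherian Rᵐᵒᵖ R :=
      isNoetherian_of_linearEquiv (MulOpposite.opLinearEquiv Rᵐᵒᵖ).symm
    obtain ⟨T, hT, hspan⟩ := exists_finset_span_eq 𝒜 (S := Rᵐᵒᵖ)
    refine ⟨T, fun C hTC n hn hC a ha => mem_of_mem_span_right hT hTC hC ha ?_⟩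
    exact hspan ▸ Submodule.subset_span ⟨n, hn, ha⟩

end GradedRing

open GradedRing in
/-- A right or left Noetherian graded ring with affine degree zero part is affine. -/
theorem stmt_3 (𝒜 : ℕ → AddSubgroup R) [GradedRing 𝒜]
    (hNoeth : IsNoetherianRing R ∨ IsNoetherianRing Rᵐᵒᵖ)
    (haff : ∃ S₀ : Finset R, (S₀ : Set R) ⊆ (𝒜 0 : Set R) ∧
      (𝒜 0 : Set R) ⊆ (Subring.closure (S₀ : Set R) : Set R)) :
    ∃ S : Finset R, Subring.closure (S : Set R) = ⊤ := by
  classical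
  obtain ⟨S₀, -, hS₀⟩ := haff
  obtain ⟨T, hT⟩ := exists_finset_forall_subset_of_lt 𝒜 hNoeth
  refine ⟨S₀ ∪ T, subring_eq_top_of_forall_subset 𝒜 fun n => ?_⟩
  induction n using Nat.strong_induction_on with
  | _ n ih =>
    rcases n.eq_zero_or_pos with rfl | hn
    · exact hS₀.trans (Subring.closure_mono (by simp))
    · exact hT _ (Subring.subset_closure.trans' (by simp)) n hn ih
end

section
/- Let A = ⊕_{n≥0} A_n be an ℕ-graded algebra over a field k that is Noetherian. If A₀ is an affine k-algebra (finitely generated as a k-algebra), then A is an affine k-algebra. -/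
/-!
Since `A` is left Noetherian, the irrelevant ideal `A₊ = ⨁_{i>0} Aᵢ` is generated, as a left
ideal, by finitely many homogeneous elements `t` of positive degree. A homogeneous `a` of degree
`n > 0` is then `∑ cₜ t`, and comparing degree `n` components gives `a = ∑ (cₜ)_{n - deg t} t`,
so by induction on `n` every homogeneous element lies in the subalgebra generated by `A₀` and
the `t`'s. Finitely many generators of `A₀` together with the `t`'s thus generate `A`.
-/

open DirectSum HomogeneousIdeal

namespace GradedAlgebra

variable {R A : Type*} [CommSemiring R] [Semiring A] [Algebra R A]
  (𝒜 : ℕ → Submodule R A) [GradedAlgebra 𝒜]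

theorem exists_finset_span_eq_irrelevant [IsNoetherianRing A] :
    ∃ T : Finset A, (T : Set A) ⊆ ⋃ i > 0, (𝒜 i : Set A) ∧
      (irrelevant 𝒜).toIdeal = Ideal.span T := by
  have hfg : (irrelevant 𝒜).toIdeal.FG := IsNoetherian.noetherian _
  rw [irrelevant_eq_span] at hfg ⊢
  exact (Submodule.fg_span_iff_fg_span_finset_subset _).mp hfg

theorem adjoin_zero_union_eq_top_of_irrelevant_le_span {T : Set A}
    (hT : T ⊆ ⋃ i > 0, (𝒜 i : Set A)) (hspan : (irrelevant 𝒜).toIdeal ≤ Ideal.span T) :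
    Algebra.adjoin R ((𝒜 0 : Set A) ∪ T) = ⊤ := by
  classical
  set B := Algebra.adjoin R ((𝒜 0 : Set A) ∪ T)
  have hTB : T ⊆ B := Set.subset_union_right.trans Algebra.subset_adjoin
  have homogeneous_mem : ∀ n, ∀ a ∈ 𝒜 n, a ∈ B := by
    intro n
    induction n using Nat.strong_induction_on with
    | _ n ih =>
      intro a ha
      rcases Nat.eq_zero_or_pos n with rfl | hn
      · exact Algebra.subset_adjoin (Or.inl ha)
      obtain ⟨c, hcT, rfl⟩ :=
        Submodule.mem_span_set.mp (hspan (mem_irrelevant_of_mem 𝒜 hn ha))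
      rw [← decompose_of_mem_same 𝒜 ha, Finsupp.sum, decompose_sum, DFinsupp.finsetSum_apply,
        Submodule.coe_sum]
      refine Subalgebra.sum_mem _ fun t ht => ?_
      obtain ⟨d, hd, htd⟩ := Set.mem_iUnion₂.mp (hT (hcT ht))
      by_cases hdn : d ≤ n
      · rw [smul_eq_mul, coe_decompose_mul_of_right_mem_of_le 𝒜 htd hdn]
        exact mul_mem (ih (n - d) (by omega) _ (Submodule.coe_mem _)) (hTB (hcT ht))
      · rw [smul_eq_mul, coe_decompose_mul_of_right_mem_of_not_le 𝒜 htd hdn]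
        exact zero_mem _
  refine top_unique fun a _ => ?_
  rw [← sum_support_decompose 𝒜 a]
  exact Subalgebra.sum_mem _ fun i _ => homogeneous_mem i _ (Submodule.coe_mem _)

end GradedAlgebra

theorem stmt_5_general {k A : Type*} [Field k] [Ring A] [Algebra k A]
    (𝒜 : ℕ → Submodule k A) [GradedAlgebra 𝒜]
    [IsNoetherianRing A]
    (haff : ∃ S₀ : Finset A, (S₀ : Set A) ⊆ (𝒜 0 : Set A) ∧
      (𝒜 0 : Set A) ⊆ (Algebra.adjoin k (S₀ : Set A) : Set A)) :
    Algebra.FiniteType k A := by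
  classical
  obtain ⟨S₀, -, hS₀⟩ := haff
  obtain ⟨T, hT, hspan⟩ := GradedAlgebra.exists_finset_span_eq_irrelevant 𝒜
  refine ⟨⟨S₀ ∪ T, top_unique ?_⟩⟩
  rw [← GradedAlgebra.adjoin_zero_union_eq_top_of_irrelevant_le_span 𝒜 hT hspan.le,
    Finset.coe_union, Algebra.adjoin_le_iff]
  exact Set.union_subset (hS₀.trans (Algebra.adjoin_mono Set.subset_union_left))
    (Set.subset_union_right.trans Algebra.subset_adjoin)

/-- A Noetherian graded algebra over a field whose degree zero part is an affine
`k`-algebra is itself an affine `k`-algebra. -/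
theorem stmt_5 {k A : Type*} [Field k] [Ring A] [Algebra k A]
    (𝒜 : ℕ → Submodule k A) [GradedAlgebra 𝒜]
    [IsNoetherianRing A] [IsNoetherianRing Aᵐᵒᵖ]
    (haff : ∃ S₀ : Finset A, (S₀ : Set A) ⊆ (𝒜 0 : Set A) ∧
      (𝒜 0 : Set A) ⊆ (Algebra.adjoin k (S₀ : Set A) : Set A)) :
    Algebra.FiniteType k A :=
  stmt_5_general 𝒜 haff
end

section
/- Let R = ⊕_{n≥0} R_n be an ℕ-graded commutative ring that is Noetherian. Then R is a finitely generated R₀-algebra. -/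
open DirectSum

instance gradeZeroAlgebra {R : Type*} [CommRing R] (𝒜 : ℕ → AddSubgroup R)
    [GradedRing 𝒜] : Algebra (𝒜 0) R :=
  ((SetLike.GradeZero.subring 𝒜).subtype).toAlgebra

/-!
Since `R` is Noetherian, the irrelevant ideal `R₊ = ⨁_{i>0} Rᵢ` is generated by finitely many
homogeneous elements `gⱼ` of positive degree. These generate `R` over `R₀`, by strong induction on
the degree: a homogeneous `x` of degree `n > 0` lies in `R₊`, so `x = ∑ cⱼ gⱼ`, and taking degree-`n`
components replaces each `cⱼ` by its component of degree `n - deg gⱼ < n`.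
-/

open HomogeneousIdeal

section

variable {R : Type*} [CommRing R] (𝒜 : ℕ → AddSubgroup R) [GradedRing 𝒜]

theorem grade_subset_adjoin_of_irrelevant_le_span {s : Set R}
    (hs : s ⊆ ⋃ i > 0, (𝒜 i : Set R)) (hspan : (𝒜₊).toIdeal ≤ Ideal.span s) (n : ℕ) :
    (𝒜 n : Set R) ⊆ Algebra.adjoin (𝒜 0) s := by
  induction n using Nat.strong_induction_on with
  | _ n ih =>
  intro x hx
  rcases Nat.eq_zero_or_pos n with rfl | hn
  · exact Subalgebra.algebraMap_mem _ (⟨x, hx⟩ : 𝒜 0)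
  obtain ⟨k, c, g, hcg⟩ := Submodule.mem_span_set'.mp (hspan (mem_irrelevant_of_mem 𝒜 hn hx))
  rw [← DirectSum.decompose_of_mem_same 𝒜 hx, ← hcg, DirectSum.decompose_sum,
    DFinsupp.finsetSum_apply, AddSubgroup.val_finsetSum]
  refine Subalgebra.sum_mem _ fun j _ => ?_
  obtain ⟨d, hd, hgd⟩ : ∃ d > 0, (g j : R) ∈ 𝒜 d := by simpa using hs (g j).2
  rw [smul_eq_mul]
  by_cases hdn : d ≤ n
  · rw [DirectSum.coe_decompose_mul_of_right_mem_of_le 𝒜 hgd hdn]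
    exact mul_mem (ih (n - d) (by omega) (SetLike.coe_mem _)) (Algebra.subset_adjoin (g j).2)
  · rw [DirectSum.coe_decompose_mul_of_right_mem_of_not_le 𝒜 hgd hdn]
    exact zero_mem _

theorem adjoin_eq_top_of_irrelevant_le_span {s : Set R}
    (hs : s ⊆ ⋃ i > 0, (𝒜 i : Set R)) (hspan : (𝒜₊).toIdeal ≤ Ideal.span s) :
    Algebra.adjoin (𝒜 0) s = ⊤ :=
  eq_top_iff.mpr fun x _ => DirectSum.Decomposition.inductionOn 𝒜 (zero_mem _)
    (fun {n} y => grade_subset_adjoin_of_irrelevant_le_span 𝒜 hs hspan n y.2)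
    (fun _ _ => add_mem) x

end

/-- A Noetherian commutative `ℕ`-graded ring is a finitely generated `R₀`-algebra. -/
theorem stmt_12 {R : Type*} [CommRing R] (𝒜 : ℕ → AddSubgroup R) [GradedRing 𝒜]
    [IsNoetherianRing R] :
    Algebra.FiniteType (𝒜 0) R := by
  obtain ⟨s, hs, hspan⟩ := (Submodule.fg_span_iff_fg_span_finset_subset _).mp
    (irrelevant_eq_span 𝒜 ▸ IsNoetherian.noetherian (𝒜₊).toIdeal)
  exact ⟨⟨s, adjoin_eq_top_of_irrelevant_le_span 𝒜 hs ((irrelevant_eq_span 𝒜).trans hspan).le⟩⟩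
end
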